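/- arXiv:1704.00690 — 2 statements merged into one kernel-verified Lean document; each statement's English description precedes it below -/
import Mathlib

section
/- Γ(L_q, z) = |L_q| if z is a solution of the Hidden Linear Function problem for q, and Γ(L_q, z) = 0 otherwise. -/
open Finset

/-- The quadratic form q : F_2^n → Z_4. -/
def quadForm {n : ℕ} (A : Fin n → Fin n → ZMod 2) (b : Fin n → ZMod 2)
    (x : Fin n → ZMod 2) : ZMod 4 :=
  2 * ∑ p ∈ Finset.univ.filter (fun p : Fin n × Fin n => p.1 < p.2),
      ((A p.1 p.2).val : ZMod 4) * ((x p.1).val : ZMod 4) * ((x p.2).val : ZMod 4)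
  + ∑ α : Fin n, ((b α).val : ZMod 4) * ((x α).val : ZMod 4)

/-- The set L_q. -/
def Lset {n : ℕ} (A : Fin n → Fin n → ZMod 2) (b : Fin n → ZMod 2) :
    Set (Fin n → ZMod 2) :=
  {x | ∀ y, quadForm A b (x + y) = quadForm A b x + quadForm A b y}

/-- F_2 inner product. -/
def ip {n : ℕ} (z x : Fin n → ZMod 2) : ZMod 2 := ∑ α, z α * x α

/-- z is a solution of the Hidden Linear Function problem for q. -/
def IsSol {n : ℕ} (A : Fin n → Fin n → ZMod 2) (b : Fin n → ZMod 2)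
    (z : Fin n → ZMod 2) : Prop :=
  ∀ x ∈ Lset A b, quadForm A b x = 2 * ((ip z x).val : ZMod 4)

/-- The partial Fourier transform Γ(L, z). -/
noncomputable def Gamma {n : ℕ} (A : Fin n → Fin n → ZMod 2) (b : Fin n → ZMod 2)
    (L : Set (Fin n → ZMod 2)) (z : Fin n → ZMod 2) : ℂ :=
  ∑ x ∈ (Set.toFinite L).toFinset,
    (-1 : ℂ) ^ (ip z x).val * Complex.I ^ (quadForm A b x).val

/-!
Since `q(x ⊕ y) = q(x) + q(y)` on `L_q`, the set `L_q` is a subgroup of `F_2^n` and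
`x ↦ (-1)^{z·x} i^{q(x)} = i^{q(x) + 2 z·x}` is a character of it. This character is trivial
exactly when `q(x) = -2 z·x = 2 z·x` on `L_q`, i.e. when `z` solves the HLF problem, and the sum of
a character over a finite group is the order of the group or `0` according as it is trivial or not.
-/

def doubleHom : ZMod 2 →+ ZMod 4 :=
  AddMonoidHom.mk' (fun c => 2 * (c.val : ZMod 4)) (by decide)

noncomputable def iChar : AddChar (ZMod 4) ℂ :=
  AddChar.zmodChar 4 Complex.I_pow_four

theorem iChar_apply (a : ZMod 4) : iChar a = Complex.I ^ a.val :=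
  AddChar.zmodChar_apply _ a

theorem iChar_eq_one_iff (a : ZMod 4) : iChar a = 1 ↔ a = 0 := by
  rw [iChar_apply, Complex.isPrimitiveRoot_I.pow_eq_one_iff_dvd, ← ZMod.natCast_eq_zero_iff,
    ZMod.natCast_zmod_val]

theorem iChar_doubleHom (c : ZMod 2) : iChar (doubleHom c) = (-1) ^ c.val := by
  have hcast : doubleHom c = ((2 * c.val : ℕ) : ZMod 4) := by simp [doubleHom]
  rw [hcast, iChar, AddChar.zmodChar_apply', pow_mul, Complex.I_sq]

section Lset

variable {n : ℕ} (A : Fin n → Fin n → ZMod 2) (b : Fin n → ZMod 2) (z : Fin n → ZMod 2)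

theorem quadForm_zero : quadForm A b 0 = 0 := by
  simp [quadForm]

def lsetAddSubgroup : AddSubgroup (Fin n → ZMod 2) where
  carrier := Lset A b
  zero_mem' y := by rw [zero_add, quadForm_zero, zero_add]
  add_mem' {x x'} hx hx' y := by rw [add_assoc, hx, hx', hx x', add_assoc]
  neg_mem' {x} hx := by
    rwa [show -x = x from funext fun i => ZMod.neg_eq_self_mod_two (x i)]

noncomputable instance : Fintype (lsetAddSubgroup A b) :=
  Fintype.ofFinite _

def quadFormHom : lsetAddSubgroup A b →+ ZMod 4 :=
  AddMonoidHom.mk' (fun x => quadForm A b x) fun x y => x.2 y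

def ipHom : (Fin n → ZMod 2) →+ ZMod 2 :=
  AddMonoidHom.mk' (ip z) (dotProduct_add z)

noncomputable def gammaChar : AddChar (lsetAddSubgroup A b) ℂ :=
  iChar.compAddMonoidHom
    (quadFormHom A b + doubleHom.comp ((ipHom z).comp (lsetAddSubgroup A b).subtype))

theorem gammaChar_apply (x : lsetAddSubgroup A b) :
    gammaChar A b z x = (-1 : ℂ) ^ (ip z x).val * Complex.I ^ (quadForm A b x).val := by
  rw [gammaChar, AddChar.compAddMonoidHom_apply, AddMonoidHom.add_apply, AddChar.map_add_eq_mul,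
    iChar_apply, mul_comm]
  exact congrArg (· * _) (iChar_doubleHom (ip z x))

theorem gammaChar_eq_one_iff : gammaChar A b z = 1 ↔ IsSol A b z := by
  have hsign : ∀ a c : ZMod 4, a + 2 * c = 0 ↔ a = 2 * c := by decide
  simp only [AddChar.eq_one_iff, gammaChar, AddChar.compAddMonoidHom_apply, iChar_eq_one_iff]
  exact ⟨fun h x hx => (hsign _ _).1 (h ⟨x, hx⟩), fun h x => (hsign _ _).2 (h x x.2)⟩

theorem Gamma_Lset_eq_sum_gammaChar :
    Gamma A b (Lset A b) z = ∑ x : lsetAddSubgroup A b, gammaChar A b z x := by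
  simp only [gammaChar_apply]
  exact Finset.sum_subtype _ (fun x => Set.Finite.mem_toFinset _) _

end Lset

theorem Gamma_Lq_general (n : ℕ)
    (A : Fin n → Fin n → ZMod 2) (b : Fin n → ZMod 2) (z : Fin n → ZMod 2) :
    (IsSol A b z → Gamma A b (Lset A b) z = (Nat.card ↥(Lset A b) : ℂ)) ∧
    (¬ IsSol A b z → Gamma A b (Lset A b) z = 0) := by
  rw [Gamma_Lset_eq_sum_gammaChar]
  constructor
  · intro hsol
    rw [AddChar.sum_eq_card_of_eq_one ((gammaChar_eq_one_iff A b z).2 hsol),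
      ← Nat.card_eq_fintype_card]
    rfl
  · intro hsol
    exact AddChar.sum_eq_zero_of_ne_one (mt (gammaChar_eq_one_iff A b z).1 hsol)

/-- Γ(L_q, z) = |L_q| if z is a solution of the Hidden Linear
Function problem for q, and Γ(L_q, z) = 0 otherwise. -/
theorem Gamma_Lq (n : ℕ) (hn : 1 ≤ n)
    (A : Fin n → Fin n → ZMod 2) (b : Fin n → ZMod 2) (z : Fin n → ZMod 2) :
    (IsSol A b z → Gamma A b (Lset A b) z = (Nat.card ↥(Lset A b) : ℂ)) ∧
    (¬ IsSol A b z → Gamma A b (Lset A b) z = 0) :=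
  Gamma_Lq_general n A b z
end

section
/- If K ⊆ F_2^n is a linear subspace with L_q + K = F_2^n and L_q ∩ K = {0}, then the absolute value |Γ(K, z)| is independent of z; that is, |Γ(K, z)| = |Γ(K, z')| for all z, z' ∈ F_2^n. -/
/-!
Writing `q (x + y) = q x + q y + 2 β(x, y)` with a symmetric `F_2`-bilinear polar form `β`, the
set `L_q` is the radical of `β`. On a complement `K` of the radical `β` is nondegenerate, so the
character `x ↦ (-1)^(z·x)` of `K` is `x ↦ (-1)^β(t, x) = i^(q (t + x) - q t - q x)` for some
`t ∈ K`. Substituting `x ↦ t + x` in the sum over `K` gives `Γ(K, z) = i^(-q t) Γ(K, 0)`.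
-/

open Finset

def doubleVal : ZMod 2 →+ ZMod 4 where
  toFun s := 2 * (s.val : ZMod 4)
  map_zero' := by decide
  map_add' := by decide

def polarForm {n : ℕ} (A : Fin n → Fin n → ZMod 2) (b : Fin n → ZMod 2) :
    LinearMap.BilinForm (ZMod 2) (Fin n → ZMod 2) :=
  LinearMap.mk₂ (ZMod 2)
    (fun x y => ∑ p ∈ univ.filter (fun p : Fin n × Fin n => p.1 < p.2),
        A p.1 p.2 * (x p.1 * y p.2 + x p.2 * y p.1) + ∑ α, b α * x α * y α)
    (fun x x' y => by
      simp only [Pi.add_apply]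
      rw [add_add_add_comm, ← sum_add_distrib, ← sum_add_distrib]
      congr 1 <;> refine sum_congr rfl fun _ _ => ?_ <;> ring)
    (fun c x y => by
      simp only [Pi.smul_apply, smul_eq_mul, mul_add, mul_sum]
      congr 1 <;> refine sum_congr rfl fun _ _ => ?_ <;> ring)
    (fun x y y' => by
      simp only [Pi.add_apply]
      rw [add_add_add_comm, ← sum_add_distrib, ← sum_add_distrib]
      congr 1 <;> refine sum_congr rfl fun _ _ => ?_ <;> ring)
    (fun c x y => by
      simp only [Pi.smul_apply, smul_eq_mul, mul_add, mul_sum]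
      congr 1 <;> refine sum_congr rfl fun _ _ => ?_ <;> ring)

theorem polarForm_apply {n : ℕ} (A : Fin n → Fin n → ZMod 2) (b : Fin n → ZMod 2)
    (x y : Fin n → ZMod 2) :
    polarForm A b x y = ∑ p ∈ univ.filter (fun p : Fin n × Fin n => p.1 < p.2),
        A p.1 p.2 * (x p.1 * y p.2 + x p.2 * y p.1) + ∑ α, b α * x α * y α :=
  rfl

theorem polarForm_isSymm {n : ℕ} (A : Fin n → Fin n → ZMod 2) (b : Fin n → ZMod 2) :
    LinearMap.IsSymm (polarForm A b) := by
  refine LinearMap.isSymm_def.mpr fun x y => ?_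
  simp only [RingHom.id_apply, polarForm_apply]
  congr 1 <;> exact sum_congr rfl fun _ _ => by ring

theorem quadForm_add {n : ℕ} (A : Fin n → Fin n → ZMod 2) (b : Fin n → ZMod 2)
    (x y : Fin n → ZMod 2) :
    quadForm A b (x + y) = quadForm A b x + quadForm A b y + doubleVal (polarForm A b x y) := by
  have quadratic (a u v w t : ZMod 2) :
      2 * ((a.val : ZMod 4) * ((u + w).val : ZMod 4) * ((v + t).val : ZMod 4)) =
        2 * ((a.val : ZMod 4) * u.val * v.val) + 2 * ((a.val : ZMod 4) * w.val * t.val)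
          + doubleVal (a * (u * t + v * w)) := by
    revert a u v w t; decide
  have linear (c u w : ZMod 2) :
      (c.val : ZMod 4) * ((u + w).val : ZMod 4) =
        (c.val : ZMod 4) * u.val + (c.val : ZMod 4) * w.val + doubleVal (c * u * w) := by
    revert c u w; decide
  simp only [quadForm, polarForm_apply, Pi.add_apply, mul_sum]
  rw [sum_congr rfl fun p _ => quadratic (A p.1 p.2) (x p.1) (x p.2) (y p.1) (y p.2),
    sum_congr rfl fun α _ => linear (b α) (x α) (y α)]
  simp only [map_add, map_sum, sum_add_distrib]
  ring

theorem Lset_eq_ker_polarForm {n : ℕ} (A : Fin n → Fin n → ZMod 2) (b : Fin n → ZMod 2) :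
    Lset A b = LinearMap.ker (polarForm A b) := by
  have doubleVal_eq_zero_iff (s : ZMod 2) : doubleVal s = 0 ↔ s = 0 := by revert s; decide
  ext x
  simp only [Lset, Set.mem_ofPred_eq, quadForm_add, add_eq_left, doubleVal_eq_zero_iff,
    SetLike.mem_coe, LinearMap.mem_ker, LinearMap.ext_iff, LinearMap.zero_apply]

theorem Submodule.isCompl_of_forall_exists_add {R M : Type*} [Semiring R] [AddCommMonoid M]
    [Module R M] {P Q : Submodule R M} (hsum : ∀ v : M, ∃ x ∈ P, ∃ y ∈ Q, v = x + y)
    (hint : (P : Set M) ∩ Q = {0}) : IsCompl P Q := by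
  refine ⟨Submodule.disjoint_def.mpr fun v hvP hvQ => ?_, codisjoint_iff.mpr ?_⟩
  · exact (Set.ext_iff.mp hint v).mp ⟨hvP, hvQ⟩
  · refine eq_top_iff.mpr fun v _ => ?_
    obtain ⟨x, hx, y, hy, rfl⟩ := hsum v
    exact Submodule.add_mem_sup hx hy

theorem LinearMap.IsSymm.exists_mem_forall_apply_eq_of_isCompl_ker {K V : Type*} [Field K]
    [AddCommGroup V] [Module K V] [FiniteDimensional K V] {B : LinearMap.BilinForm K V}
    (hB : LinearMap.IsSymm B) {W : Submodule K V} (hW : IsCompl W (LinearMap.ker B))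
    (f : Module.Dual K V) : ∃ t ∈ W, ∀ y ∈ W, B t y = f y := by
  have hnd := hB.nondegenerate_restrict_of_isCompl_ker hW
  let t := (LinearMap.BilinForm.toDual _ hnd).symm (f.comp W.subtype)
  refine ⟨t, t.2, fun y hy => ?_⟩
  exact LinearMap.BilinForm.apply_toDual_symm_apply (hB := hnd) _ ⟨y, hy⟩

theorem pow_val_add_of_pow_eq_one {M : Type*} [Monoid M] {n : ℕ} [NeZero n] {g : M}
    (hg : g ^ n = 1) (a c : ZMod n) : g ^ (a + c).val = g ^ a.val * g ^ c.val := by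
  rw [ZMod.val_add, ← pow_eq_pow_mod _ hg, pow_add]

theorem neg_one_pow_val_eq_I_pow_doubleVal (s : ZMod 2) :
    (-1 : ℂ) ^ s.val = Complex.I ^ (doubleVal s).val := by
  obtain rfl | rfl : s = 0 ∨ s = 1 := by revert s; decide
  · rfl
  · show (-1 : ℂ) ^ 1 = Complex.I ^ 2
    rw [pow_one, Complex.I_sq]

theorem Gamma_eq_I_pow_mul_Gamma_zero {n : ℕ} (A : Fin n → Fin n → ZMod 2)
    (b : Fin n → ZMod 2) (K : Submodule (ZMod 2) (Fin n → ZMod 2)) {z t : Fin n → ZMod 2}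
    (ht : t ∈ K) (hzt : ∀ y ∈ K, polarForm A b t y = ip z y) :
    Gamma A b K z = Complex.I ^ (-quadForm A b t).val * Gamma A b K 0 := by
  classical
  have hI := pow_val_add_of_pow_eq_one Complex.I_pow_four
  have hK (x) : x ∈ (Set.toFinite (K : Set (Fin n → ZMod 2))).toFinset ↔ x ∈ K :=
    Set.Finite.mem_toFinset _
  simp only [Gamma]
  rw [sum_subtype (p := (· ∈ K)) _ hK, sum_subtype (p := (· ∈ K)) _ hK, mul_sum]
  refine Fintype.sum_equiv (Equiv.addLeft ⟨t, ht⟩) _ _ fun x => ?_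
  rw [show ip 0 _ = 0 from sum_eq_zero fun _ _ => zero_mul _, ZMod.val_zero, pow_zero, one_mul,
    ← hzt x x.2, neg_one_pow_val_eq_I_pow_doubleVal, ← hI, ← hI]
  congr 2
  rw [Equiv.coe_addLeft, Submodule.coe_add, quadForm_add]
  ring

theorem norm_Gamma_eq_norm_Gamma_zero {n : ℕ} {A : Fin n → Fin n → ZMod 2}
    {b : Fin n → ZMod 2} {K : Submodule (ZMod 2) (Fin n → ZMod 2)}
    (hK : IsCompl K (LinearMap.ker (polarForm A b))) (z : Fin n → ZMod 2) :
    ‖Gamma A b K z‖ = ‖Gamma A b K 0‖ := by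
  obtain ⟨t, ht, hzt⟩ := (polarForm_isSymm A b).exists_mem_forall_apply_eq_of_isCompl_ker hK
    (dotProductEquiv (ZMod 2) (Fin n) z)
  rw [Gamma_eq_I_pow_mul_Gamma_zero A b K ht hzt, norm_mul, norm_pow, Complex.norm_I, one_pow,
    one_mul]

theorem abs_Gamma_K_const_general (n : ℕ)
    (A : Fin n → Fin n → ZMod 2) (b : Fin n → ZMod 2)
    (K : Submodule (ZMod 2) (Fin n → ZMod 2))
    (hsum : ∀ v : Fin n → ZMod 2, ∃ x ∈ Lset A b, ∃ y ∈ K, v = x + y)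
    (hint : Lset A b ∩ (K : Set (Fin n → ZMod 2)) = {0})
    (z z' : Fin n → ZMod 2) :
    ‖Gamma A b (K : Set (Fin n → ZMod 2)) z‖
      = ‖Gamma A b (K : Set (Fin n → ZMod 2)) z'‖ := by
  rw [Lset_eq_ker_polarForm] at hsum hint
  have hK := (Submodule.isCompl_of_forall_exists_add hsum hint).symm
  rw [norm_Gamma_eq_norm_Gamma_zero hK z, norm_Gamma_eq_norm_Gamma_zero hK z']

/-- If K is a linear subspace with L_q + K = F_2^n and
L_q ∩ K = {0}, then |Γ(K, z)| does not depend on z. -/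
theorem abs_Gamma_K_const (n : ℕ) (hn : 1 ≤ n)
    (A : Fin n → Fin n → ZMod 2) (b : Fin n → ZMod 2)
    (K : Submodule (ZMod 2) (Fin n → ZMod 2))
    (hsum : ∀ v : Fin n → ZMod 2, ∃ x ∈ Lset A b, ∃ y ∈ K, v = x + y)
    (hint : Lset A b ∩ (K : Set (Fin n → ZMod 2)) = {0})
    (z z' : Fin n → ZMod 2) :
    ‖Gamma A b (K : Set (Fin n → ZMod 2)) z‖
      = ‖Gamma A b (K : Set (Fin n → ZMod 2)) z'‖ :=
  abs_Gamma_K_const_general n A b K hsum hint z z'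
end
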